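/- Let D be a proper subdomain of a Banach space, x ≠ y ∈ D, β a curve in D joining x and y, and γ a λ-curve joining x and y. If ℓ(γ) > ν₁ ℓ(β) with ν₁ ≥ 18e⁹, then for every w ∈ β one has d_D(w) ≤ 2ℓ(β). -/

import Mathlib

/-!
If some point of `β` were at distance `R > 2ℓ(β)` from `∂D`, the whole of `β` would stay at
distance at least `R - ℓ(β) > ℓ(β)`, so `k_D(x, y) ≤ ℓ(β) / (R - ℓ(β)) < 1`. Being a
`9/8`-quasigeodesic, `γ` then has quasihyperbolic length at most `9/8` of that. On the other
hand `d_D` grows at most linearly along `γ`, which forces its quasihyperbolic length to be at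
least `log (1 + ℓ(γ) / d_D(x))` with `d_D(x) ≤ R + ℓ(β)`; once `ℓ(γ) > 18 ℓ(β)` the two bounds
are incompatible.
-/

open Set Metric MeasureTheory

noncomputable section

variable {E : Type*} [NormedAddCommGroup E]

/-- Distance from a point to the boundary (= complement) of `D`. -/
def dB (D : Set E) (z : E) : ℝ := Metric.infDist z Dᶜ

/-- `D` is a proper subdomain of the ambient space. -/
def IsProperDomain (D : Set E) : Prop := IsOpen D ∧ IsConnected D ∧ Dᶜ.Nonempty

/-- A rectifiable arc inside `D`, parametrized by arclength on `[a,b]`. -/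
structure IsArc (D : Set E) (γ : ℝ → E) (a b : ℝ) : Prop where
  le : a ≤ b
  lip : LipschitzOnWith 1 γ (Set.Icc a b)
  unit : ∀ s t, s ∈ Set.Icc a b → t ∈ Set.Icc a b → s ≤ t →
    eVariationOn γ (Set.Icc s t) = ENNReal.ofReal (t - s)
  mem : ∀ t ∈ Set.Icc a b, γ t ∈ D

/-- Quasihyperbolic length of the piece on `[a,b]` of an arclength-parametrized arc. -/
def qhLen (D : Set E) (γ : ℝ → E) (a b : ℝ) : ℝ := ∫ t in a..b, 1 / dB D (γ t)

/-- The quasihyperbolic distance in `D`: infimum of quasihyperbolic lengths of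
arcs joining the two points. -/
def qhDist (D : Set E) (x y : E) : ℝ :=
  sInf { L : ℝ | ∃ T : ℝ, ∃ γ : ℝ → E,
    IsArc D γ 0 T ∧ γ 0 = x ∧ γ T = y ∧ L = qhLen D γ 0 T }

/-- `γ` is a `c`-quasigeodesic in `D` on `[a,b]`. -/
def IsQuasigeodesicOn (D : Set E) (c : ℝ) (γ : ℝ → E) (a b : ℝ) : Prop :=
  IsArc D γ a b ∧ ∀ s t, s ∈ Set.Icc a b → t ∈ Set.Icc a b → s ≤ t →
    qhLen D γ s t ≤ c * qhDist D (γ s) (γ t)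

/-- The coefficient `c_{x,y}^λ = min (1 + λ/(2 k_D(x,y))) (9/8)`. -/
def cLam (D : Set E) (lam : ℝ) (x y : E) : ℝ :=
  min (1 + lam / (2 * qhDist D x y)) (9 / 8)

/-- `γ` is a `λ`-curve in `D` on `[a,b]`: a `c_{x,y}^λ`-quasigeodesic where `x,y`
are its endpoints. -/
def IsLamCurve (D : Set E) (lam : ℝ) (γ : ℝ → E) (a b : ℝ) : Prop :=
  IsQuasigeodesicOn D (cLam D lam (γ a) (γ b)) γ a b

/-- `γ` is `h`-short in `D`. -/
def IsShort (D : Set E) (h : ℝ) (γ : ℝ → E) (a b : ℝ) : Prop :=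
  IsArc D γ a b ∧ ∀ s t, s ∈ Set.Icc a b → t ∈ Set.Icc a b → s ≤ t →
    qhLen D γ s t ≤ qhDist D (γ s) (γ t) + h

/-- The point `w` lies within quasihyperbolic distance `C` of the union of the
two given sides. -/
def WithinOfSides (D : Set E) (C : ℝ) (w : E) (α : ℝ → E) (a b : ℝ)
    (α' : ℝ → E) (a' b' : ℝ) : Prop :=
  ∃ s : ℝ, (s ∈ Set.Icc a b ∧ qhDist D w (α s) ≤ C) ∨
    (s ∈ Set.Icc a' b' ∧ qhDist D w (α' s) ≤ C)

/-- `(D, k_D)` is a `(C,h)`-Rips space: every side of an `h`-short triangle lies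
in the `C`-neighbourhood of the two other sides. -/
def IsRips (D : Set E) (C h : ℝ) : Prop :=
  ∀ (α₁ α₂ α₃ : ℝ → E) (a₁ b₁ a₂ b₂ a₃ b₃ : ℝ),
    IsShort D h α₁ a₁ b₁ → IsShort D h α₂ a₂ b₂ → IsShort D h α₃ a₃ b₃ →
    α₁ b₁ = α₂ a₂ → α₂ b₂ = α₃ a₃ → α₃ b₃ = α₁ a₁ →
    (∀ t ∈ Set.Icc a₁ b₁, WithinOfSides D C (α₁ t) α₂ a₂ b₂ α₃ a₃ b₃) ∧
    (∀ t ∈ Set.Icc a₂ b₂, WithinOfSides D C (α₂ t) α₃ a₃ b₃ α₁ a₁ b₁) ∧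
    (∀ t ∈ Set.Icc a₃ b₃, WithinOfSides D C (α₃ t) α₁ a₁ b₁ α₂ a₂ b₂)

/-- `D` is `δ`-Gromov hyperbolic with respect to the quasihyperbolic metric. -/
def IsGromovHyp (D : Set E) (δ : ℝ) : Prop :=
  ∀ x ∈ D, ∀ y ∈ D, ∀ z ∈ D, ∀ p ∈ D,
    min ((qhDist D p x + qhDist D p y - qhDist D x y) / 2)
        ((qhDist D p y + qhDist D p z - qhDist D y z) / 2) - δ ≤
      (qhDist D p x + qhDist D p z - qhDist D x z) / 2

/-- `μ` is a thin-triangles constant for triangles of `c₀`-quasigeodesics in `D`. -/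
def ThinTriangles (D : Set E) (c₀ μ : ℝ) : Prop :=
  ∀ (γ₁ γ₂ γ₃ : ℝ → E) (a₁ b₁ a₂ b₂ a₃ b₃ : ℝ),
    IsQuasigeodesicOn D c₀ γ₁ a₁ b₁ → IsQuasigeodesicOn D c₀ γ₂ a₂ b₂ →
    IsQuasigeodesicOn D c₀ γ₃ a₃ b₃ →
    γ₁ b₁ = γ₂ a₂ → γ₂ b₂ = γ₃ a₃ → γ₃ b₃ = γ₁ a₁ →
    ∀ t ∈ Set.Icc a₁ b₁, WithinOfSides D μ (γ₁ t) γ₂ a₂ b₂ γ₃ a₃ b₃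

/-- `D` is a `c`-uniform domain. -/
def IsUniform (D : Set E) (c : ℝ) : Prop :=
  ∀ z₁ ∈ D, ∀ z₂ ∈ D, ∃ γ : ℝ → E, ∃ a b : ℝ, IsArc D γ a b ∧ γ a = z₁ ∧ γ b = z₂ ∧
    (∀ t ∈ Set.Icc a b, min (t - a) (b - t) ≤ c * dB D (γ t)) ∧
    b - a ≤ c * ‖z₁ - z₂‖

/-- `D` is an `a`-John domain. -/
def IsJohn (D : Set E) (a : ℝ) : Prop :=
  ∀ z₁ ∈ D, ∀ z₂ ∈ D, ∃ γ : ℝ → E, ∃ s t : ℝ, IsArc D γ s t ∧ γ s = z₁ ∧ γ t = z₂ ∧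
    ∀ u ∈ Set.Icc s t, min (u - s) (t - u) ≤ a * dB D (γ u)

/-- The inner (length) distance in `D`. -/
def innerDist (D : Set E) (x y : E) : ℝ :=
  sInf { L : ℝ | ∃ γ : ℝ → E, ∃ s t : ℝ, IsArc D γ s t ∧ γ s = x ∧ γ t = y ∧ L = t - s }

/-- `γ` is an inner `b`-uniform curve in `D`. -/
def IsInnerUniformCurve (D : Set E) (b : ℝ) (γ : ℝ → E) (s t : ℝ) : Prop :=
  (∀ u ∈ Set.Icc s t, min (u - s) (t - u) ≤ b * dB D (γ u)) ∧
  t - s ≤ b * innerDist D (γ s) (γ t)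

/-- `D` is an inner `b`-uniform domain. -/
def IsInnerUniform (D : Set E) (b : ℝ) : Prop :=
  ∀ z₁ ∈ D, ∀ z₂ ∈ D, ∃ γ : ℝ → E, ∃ s t : ℝ,
    IsArc D γ s t ∧ γ s = z₁ ∧ γ t = z₂ ∧ IsInnerUniformCurve D b γ s t

/-- Length (total variation) of a curve on `[a,b]`. -/
def lenOn {F : Type*} [NormedAddCommGroup F] (γ : ℝ → F) (a b : ℝ) : ℝ :=
  (eVariationOn γ (Set.Icc a b)).toReal

variable {F : Type*} [NormedAddCommGroup F]

/-- `f` is a homeomorphism from `D` onto `D'`. -/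
def IsHomeoOn (f : E → F) (D : Set E) (D' : Set F) : Prop :=
  ∃ g : F → E, ContinuousOn f D ∧ ContinuousOn g D' ∧ Set.MapsTo f D D' ∧
    Set.MapsTo g D' D ∧ (∀ x ∈ D, g (f x) = x) ∧ (∀ y ∈ D', f (g y) = y)

/-- `f : D → D'` is `(M,C)`-coarsely quasihyperbolic. -/
def IsCQH (f : E → F) (D : Set E) (D' : Set F) (M C : ℝ) : Prop :=
  ∀ x ∈ D, ∀ y ∈ D,
    (qhDist D x y - C) / M ≤ qhDist D' (f x) (f y) ∧
    qhDist D' (f x) (f y) ≤ M * qhDist D x y + C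


theorem dB_pos {D : Set E} (hO : IsOpen D) (hne : Dᶜ.Nonempty) {z : E} (hz : z ∈ D) :
    0 < dB D z :=
  (hO.isClosed_compl.notMem_iff_infDist_pos hne).1 (by simpa using hz)

namespace IsArc

variable {D : Set E} {γ : ℝ → E} {a b : ℝ}

theorem dist_le (h : IsArc D γ a b) {s t : ℝ} (hs : s ∈ Icc a b) (ht : t ∈ Icc a b) :
    dist (γ s) (γ t) ≤ |s - t| := by
  simpa [Real.dist_eq] using h.lip.dist_le_mul s hs t ht

theorem dB_le_dB_add (h : IsArc D γ a b) {s t : ℝ} (hs : s ∈ Icc a b) (ht : t ∈ Icc a b) :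
    dB D (γ s) ≤ dB D (γ t) + |s - t| :=
  infDist_le_infDist_add_dist.trans (add_le_add_right (h.dist_le hs ht) _)

theorem dB_le_dB_add_length (h : IsArc D γ a b) {s t : ℝ} (hs : s ∈ Icc a b)
    (ht : t ∈ Icc a b) : dB D (γ s) ≤ dB D (γ t) + (b - a) := by
  have hst : |s - t| ≤ b - a :=
    abs_sub_le_iff.2 ⟨by linarith [hs.2, ht.1], by linarith [hs.1, ht.2]⟩
  exact (h.dB_le_dB_add hs ht).trans (add_le_add_right hst _)

theorem intervalIntegrable_one_div_dB (h : IsArc D γ a b)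
    (hpos : ∀ t ∈ Icc a b, 0 < dB D (γ t)) :
    IntervalIntegrable (fun t => 1 / dB D (γ t)) volume a b :=
  (continuousOn_const.div ((continuous_infDist_pt _).comp_continuousOn h.lip.continuousOn)
    fun t ht => (hpos t ht).ne').intervalIntegrable_of_Icc h.le

theorem comp_add_const (h : IsArc D γ a b) : IsArc D (fun t => γ (t + a)) 0 (b - a) := by
  have hmem : ∀ t ∈ Icc 0 (b - a), t + a ∈ Icc a b := fun t ht =>
    ⟨by linarith [ht.1], by linarith [ht.2]⟩
  refine ⟨sub_nonneg.2 h.le, fun u hu v hv => ?_, fun s t hs ht hst => ?_,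
    fun t ht => h.mem _ (hmem t ht)⟩
  · simpa [edist_add_right] using h.lip (hmem u hu) (hmem v hv)
  · have hshift : eVariationOn (fun u => γ (u + a)) (Icc s t) =
        eVariationOn γ (Icc (s + a) (t + a)) := by
      rw [show (fun u => γ (u + a)) = γ ∘ (· + a) from rfl,
        eVariationOn.comp_eq_of_monotoneOn γ (fun u => u + a)
          fun _ _ _ _ huv => add_le_add_left huv a, image_add_const_Icc]
    rw [hshift, h.unit _ _ (hmem s hs) (hmem t ht) (by linarith), add_sub_add_right_eq_sub]

end IsArc

variable {D : Set E} {γ : ℝ → E} {a b : ℝ}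

theorem qhLen_nonneg (h : a ≤ b) : 0 ≤ qhLen D γ a b :=
  intervalIntegral.integral_nonneg h fun _ _ => one_div_nonneg.2 infDist_nonneg

theorem qhDist_nonneg (D : Set E) (x y : E) : 0 ≤ qhDist D x y :=
  Real.sInf_nonneg <| by
    rintro _ ⟨T, γ, hγ, -, -, rfl⟩
    exact qhLen_nonneg hγ.le

theorem qhDist_le_qhLen (h : IsArc D γ a b) : qhDist D (γ a) (γ b) ≤ qhLen D γ a b := by
  have hlen : qhLen D (fun t => γ (t + a)) 0 (b - a) = qhLen D γ a b := by
    simpa [qhLen] using intervalIntegral.integral_comp_add_right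
      (fun t => 1 / dB D (γ t)) (a := 0) (b := b - a) a
  refine csInf_le ⟨0, ?_⟩ ⟨b - a, _, h.comp_add_const, by simp, by simp, hlen.symm⟩
  rintro _ ⟨T, γ', hγ', -, -, rfl⟩
  exact qhLen_nonneg hγ'.le

theorem qhLen_le_of_le_dB (h : IsArc D γ a b) {r : ℝ} (hr : 0 < r)
    (hle : ∀ t ∈ Icc a b, r ≤ dB D (γ t)) : qhLen D γ a b ≤ (b - a) / r := by
  have hmono := intervalIntegral.integral_mono_on h.le
    (h.intervalIntegrable_one_div_dB fun t ht => hr.trans_le (hle t ht))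
    intervalIntegrable_const fun t ht => one_div_le_one_div_of_le hr (hle t ht)
  simpa [qhLen, div_eq_mul_one_div (b - a)] using hmono

/-- The quasihyperbolic density along `γ` is at least `1 / (d_D(γ a) + (t - a))`. -/
theorem log_one_add_div_dB_le_qhLen (hO : IsOpen D) (hne : Dᶜ.Nonempty) (h : IsArc D γ a b) :
    Real.log (1 + (b - a) / dB D (γ a)) ≤ qhLen D γ a b := by
  have hpos : ∀ t ∈ Icc a b, 0 < dB D (γ t) := fun t ht => dB_pos hO hne (h.mem t ht)
  have ha : a ∈ Icc a b := left_mem_Icc.2 h.le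
  set d := dB D (γ a)
  have hd : 0 < d := hpos a ha
  have hdens : ∀ t ∈ Icc a b, 1 / (t + (d - a)) ≤ 1 / dB D (γ t) := fun t ht =>
    one_div_le_one_div_of_le (hpos t ht) <| by
      have := h.dB_le_dB_add ht ha
      rw [abs_of_nonneg (sub_nonneg.2 ht.1)] at this
      linarith
  have hint : IntervalIntegrable (fun t => 1 / (t + (d - a))) volume a b :=
    (continuousOn_const.div (continuousOn_id.add continuousOn_const) fun t ht =>
      (by linarith [ht.1] : (0 : ℝ) < t + (d - a)).ne').intervalIntegrable_of_Icc h.le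
  have hcalc : ∫ t in a..b, 1 / (t + (d - a)) = Real.log (1 + (b - a) / d) := by
    rw [intervalIntegral.integral_comp_add_right (fun u => 1 / u),
      integral_one_div_of_pos (by linarith) (by linarith [h.le]),
      show a + (d - a) = d by ring, show b + (d - a) = d + (b - a) by ring, add_div,
      div_self hd.ne']
  exact hcalc ▸ intervalIntegral.integral_mono_on h.le hint
    (h.intervalIntegrable_one_div_dB hpos) hdens

theorem IsLamCurve.qhLen_le {lam : ℝ} (h : IsLamCurve D lam γ a b) :
    qhLen D γ a b ≤ 9 / 8 * qhDist D (γ a) (γ b) :=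
  (h.2 a b (left_mem_Icc.2 h.1.le) (right_mem_Icc.2 h.1.le) h.1.le).trans <|
    mul_le_mul_of_nonneg_right (min_le_right _ _) (qhDist_nonneg D _ _)

theorem nine_eighths_mul_lt_log_one_add {u s : ℝ} (hu : u < 1) (hs : 0 < s)
    (hus : 9 / 2 * u ≤ s) : 9 / 8 * u < Real.log (1 + s) := by
  rcases le_or_gt 3 s with hs3 | hs3
  · have hlog4 : Real.log 4 = 2 * Real.log 2 := by
      rw [show (4 : ℝ) = 2 ^ 2 by norm_num, Real.log_pow, Nat.cast_ofNat]
    have := Real.log_le_log (by norm_num) (by linarith : (4 : ℝ) ≤ 1 + s)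
    linarith [Real.log_two_gt_d9]
  · have hinv := Real.one_sub_inv_le_log_of_pos (by linarith : 0 < 1 + s)
    have hquot : s / 4 < 1 - (1 + s)⁻¹ := by
      rw [← one_div, one_sub_div (by linarith), add_sub_cancel_left,
        div_lt_div_iff_of_pos_left hs (by norm_num) (by linarith)]
      linarith
    linarith

/-- Read `L = ℓ(β)`, `R = d_D(β t₀)`, `d = d_D(x)`, `T = ℓ(γ)`. -/
theorem nine_eighths_mul_div_lt_log {L R d T ν : ℝ} (hL : 0 ≤ L) (hR : 2 * L < R) (hd : 0 < d)
    (hdR : d ≤ R + L) (hν : 18 ≤ ν) (hT : ν * L < T) :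
    9 / 8 * (L / (R - L)) < Real.log (1 + T / d) := by
  have hRL : 0 < R - L := by linarith
  refine nine_eighths_mul_lt_log_one_add ((div_lt_one hRL).2 (by linarith)) ?_ ?_
  · exact div_pos (by nlinarith) hd
  · rw [← mul_div_assoc, div_le_div_iff₀ hRL hd]
    nlinarith [mul_le_mul_of_nonneg_left hdR hL, mul_nonneg hL (by linarith : 0 ≤ R - 2 * L),
      mul_nonneg (mul_nonneg (sub_nonneg.2 hν) hL) hRL.le]

theorem stmt6_general
    (D : Set E) (hD : IsProperDomain D) (lam ν₁ : ℝ)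
    (hν : 18 * Real.exp 9 ≤ ν₁) (x y : E)
    (β : ℝ → E) (aβ bβ : ℝ) (hβ : IsArc D β aβ bβ) (hβa : β aβ = x) (hβb : β bβ = y)
    (γ : ℝ → E) (aγ bγ : ℝ) (hγ : IsLamCurve D lam γ aγ bγ) (hγa : γ aγ = x) (hγb : γ bγ = y)
    (hlen : ν₁ * (bβ - aβ) < bγ - aγ) :
    ∀ t ∈ Set.Icc aβ bβ, dB D (β t) ≤ 2 * (bβ - aβ) := by
  obtain ⟨hO, -, hne⟩ := hD
  intro t₀ ht₀
  by_contra! hfar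
  have hL : 0 ≤ bβ - aβ := sub_nonneg.2 hβ.le
  have hβ_far : ∀ t ∈ Icc aβ bβ, dB D (β t₀) - (bβ - aβ) ≤ dB D (β t) := fun t ht => by
    linarith [hβ.dB_le_dB_add_length ht₀ ht]
  have hk : qhDist D x y ≤ (bβ - aβ) / (dB D (β t₀) - (bβ - aβ)) :=
    hβa ▸ hβb ▸ (qhDist_le_qhLen hβ).trans (qhLen_le_of_le_dB hβ (by linarith) hβ_far)
  have hγ_short : Real.log (1 + (bγ - aγ) / dB D x) ≤
      9 / 8 * ((bβ - aβ) / (dB D (β t₀) - (bβ - aβ))) :=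
    calc _ ≤ qhLen D γ aγ bγ := hγa ▸ log_one_add_div_dB_le_qhLen hO hne hγ.1
      _ ≤ 9 / 8 * qhDist D x y := hγa ▸ hγb ▸ hγ.qhLen_le
      _ ≤ _ := by gcongr
  refine hγ_short.not_gt (nine_eighths_mul_div_lt_log hL hfar
    (hγa ▸ dB_pos hO hne (hγ.1.mem aγ (left_mem_Icc.2 hγ.1.le)))
    (hβa ▸ hβ.dB_le_dB_add_length (left_mem_Icc.2 hβ.le) ht₀) ?_ hlen)
  linarith [Real.one_le_exp (by norm_num : (0 : ℝ) ≤ 9)]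

/-- If a `λ`-curve `γ` from `x` to `y` is much longer than a
curve `β` with the same endpoints (`ℓ(γ) > ν₁ ℓ(β)`, `ν₁ ≥ 18 e⁹`), then every
point of `β` satisfies `d_D(w) ≤ 2 ℓ(β)`. -/
theorem stmt6 [NormedSpace ℝ E] [CompleteSpace E]
    (D : Set E) (hD : IsProperDomain D) (lam ν₁ : ℝ)
    (hlam₀ : 0 < lam) (hlam₁ : lam ≤ 1 / 2) (hν : 18 * Real.exp 9 ≤ ν₁)
    (x y : E) (hx : x ∈ D) (hy : y ∈ D) (hxy : x ≠ y)
    (β : ℝ → E) (aβ bβ : ℝ) (hβ : IsArc D β aβ bβ) (hβa : β aβ = x) (hβb : β bβ = y)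
    (γ : ℝ → E) (aγ bγ : ℝ) (hγ : IsLamCurve D lam γ aγ bγ) (hγa : γ aγ = x) (hγb : γ bγ = y)
    (hlen : ν₁ * (bβ - aβ) < bγ - aγ) :
    ∀ t ∈ Set.Icc aβ bβ, dB D (β t) ≤ 2 * (bβ - aβ) :=
  stmt6_general D hD lam ν₁ hν x y β aβ bβ hβ hβa hβb γ aγ bγ hγ hγa hγb hlen

end
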